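/- For x > 0, the standard normal hazard-type ratio satisfies x < φ(x)/Φ(-x) < x + 1/x, where φ is the standard normal density and Φ the standard normal CDF. -/

import Mathlib

/-! Since `-φ` is an antiderivative of `t φ(t)` and `-φ(t)/t` one of `(1 + t⁻²) φ(t)`,
`φ(x) = ∫ₓ^∞ t φ(t) dt` and `φ(x)/x = ∫ₓ^∞ (1 + t⁻²) φ(t) dt`. On `(x, ∞)` the first integrand
exceeds `x φ(t)` and the second is below `(1 + x⁻²) φ(t)`; integrating gives
`x Φ(-x) < φ(x) < (x + 1/x) Φ(-x)`. -/

open MeasureTheory Real Set Filter Topology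

/-- The standard normal density function. -/
noncomputable def stdNormalPDF (x : ℝ) : ℝ :=
  (Real.sqrt (2 * Real.pi))⁻¹ * Real.exp (-x ^ 2 / 2)

/-- The standard normal cumulative distribution function. -/
noncomputable def stdNormalCDF (x : ℝ) : ℝ :=
  ∫ u in Set.Iio x, (Real.sqrt (2 * Real.pi))⁻¹ * Real.exp (-u ^ 2 / 2)

theorem setIntegral_pos_of_forall_pos {X : Type*} [MeasurableSpace X] {μ : Measure X}
    {s : Set X} {f : X → ℝ} (hs : MeasurableSet s) (hμs : μ s ≠ 0) (hf : IntegrableOn f s μ)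
    (hpos : ∀ t ∈ s, 0 < f t) : 0 < ∫ t in s, f t ∂μ := by
  rw [setIntegral_pos_iff_support_of_nonneg_ae
    (ae_restrict_of_forall_mem hs fun t ht => (hpos t ht).le) hf]
  refine (pos_iff_ne_zero.2 hμs).trans_le (measure_mono fun t ht => ⟨?_, ht⟩)
  exact (hpos t ht).ne'

theorem exp_neg_sq_div_two (t : ℝ) :
    Real.exp (-t ^ 2 / 2) = Real.exp (-(1 / 2) * t ^ 2) := by
  ring_nf

theorem stdNormalPDF_pos (t : ℝ) : 0 < stdNormalPDF t := by
  unfold stdNormalPDF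
  positivity

theorem hasDerivAt_stdNormalPDF (t : ℝ) : HasDerivAt stdNormalPDF (-t * stdNormalPDF t) t := by
  have hexponent : HasDerivAt (fun u : ℝ => -u ^ 2 / 2) (-t) t :=
    ((hasDerivAt_pow 2 t).neg.div_const 2).congr_deriv (by ring)
  have h : HasDerivAt stdNormalPDF _ t :=
    ((Real.hasDerivAt_exp _).comp t hexponent).const_mul (Real.sqrt (2 * Real.pi))⁻¹
  exact h.congr_deriv (by unfold stdNormalPDF; ring)

theorem tendsto_stdNormalPDF_atTop : Tendsto stdNormalPDF atTop (𝓝 0) := by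
  have hexponent : Tendsto (fun t : ℝ => -t ^ 2 / 2) atTop atBot :=
    (tendsto_neg_atBot_iff.2 (tendsto_pow_atTop two_ne_zero)).atBot_div_const two_pos
  have h := (Real.tendsto_exp_atBot.comp hexponent).const_mul (Real.sqrt (2 * Real.pi))⁻¹
  rwa [mul_zero] at h

theorem integrable_stdNormalPDF : Integrable stdNormalPDF := by
  unfold stdNormalPDF
  simp_rw [exp_neg_sq_div_two]
  exact (integrable_exp_neg_mul_sq one_half_pos).const_mul _

theorem integrable_mul_stdNormalPDF : Integrable fun t => t * stdNormalPDF t := by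
  unfold stdNormalPDF
  simp_rw [exp_neg_sq_div_two, mul_left_comm _ (Real.sqrt (2 * Real.pi))⁻¹]
  exact (integrable_mul_exp_neg_mul_sq one_half_pos).const_mul _

theorem stdNormalCDF_neg (x : ℝ) : stdNormalCDF (-x) = ∫ t in Ioi x, stdNormalPDF t := by
  rw [stdNormalCDF, ← integral_Iic_eq_integral_Iio, ← integral_comp_neg_Ioi]
  simp [stdNormalPDF]

theorem integral_Ioi_mul_stdNormalPDF (x : ℝ) :
    ∫ t in Ioi x, t * stdNormalPDF t = stdNormalPDF x := by
  have hderiv : ∀ t ∈ Ici x, HasDerivAt (fun u => -stdNormalPDF u) (t * stdNormalPDF t) t :=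
    fun t _ => (hasDerivAt_stdNormalPDF t).neg.congr_deriv (by ring)
  rw [integral_Ioi_of_hasDerivAt_of_tendsto' hderiv integrable_mul_stdNormalPDF.integrableOn
    (by simpa using tendsto_stdNormalPDF_atTop.neg)]
  ring

theorem integral_Ioi_one_add_inv_sq_mul_stdNormalPDF {x : ℝ} (hx : 0 < x) :
    ∫ t in Ioi x, (1 + t⁻¹ ^ 2) * stdNormalPDF t = stdNormalPDF x / x := by
  have hderiv : ∀ t ∈ Ici x,
      HasDerivAt (fun u => -stdNormalPDF u / u) ((1 + t⁻¹ ^ 2) * stdNormalPDF t) t := by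
    intro t ht
    have ht0 : t ≠ 0 := (hx.trans_le ht).ne'
    refine ((hasDerivAt_stdNormalPDF t).neg.div (hasDerivAt_id t) ht0).congr_deriv ?_
    simp only [Pi.neg_apply, id]
    field_simp
    ring
  have hnonneg : ∀ t ∈ Ioi x, 0 ≤ (1 + t⁻¹ ^ 2) * stdNormalPDF t :=
    fun t _ => mul_nonneg (by positivity) (stdNormalPDF_pos t).le
  have hlim : Tendsto (fun u => -stdNormalPDF u / u) atTop (𝓝 0) := by
    simpa [neg_div, div_eq_mul_inv] using tendsto_stdNormalPDF_atTop.neg.mul tendsto_inv_atTop_zero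
  rw [integral_Ioi_of_hasDerivAt_of_nonneg' hderiv hnonneg hlim]
  ring

theorem integrableOn_one_add_inv_sq_mul_stdNormalPDF {x : ℝ} (hx : 0 < x) :
    IntegrableOn (fun t => (1 + t⁻¹ ^ 2) * stdNormalPDF t) (Ioi x) := by
  refine Integrable.of_integral_ne_zero ?_
  rw [integral_Ioi_one_add_inv_sq_mul_stdNormalPDF hx]
  exact (div_pos (stdNormalPDF_pos x) hx).ne'

theorem integral_Ioi_stdNormalPDF_pos (x : ℝ) : 0 < ∫ t in Ioi x, stdNormalPDF t :=
  setIntegral_pos_of_forall_pos measurableSet_Ioi (by simp) integrable_stdNormalPDF.integrableOn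
    fun t _ => stdNormalPDF_pos t

theorem mul_integral_Ioi_stdNormalPDF_lt (x : ℝ) :
    x * ∫ t in Ioi x, stdNormalPDF t < stdNormalPDF x := by
  have hmul : IntegrableOn (fun t => t * stdNormalPDF t) (Ioi x) :=
    integrable_mul_stdNormalPDF.integrableOn
  have hpdf : IntegrableOn (fun t => x * stdNormalPDF t) (Ioi x) :=
    integrable_stdNormalPDF.integrableOn.const_mul x
  have hgap : 0 < ∫ t in Ioi x, (t * stdNormalPDF t - x * stdNormalPDF t) := by
    refine setIntegral_pos_of_forall_pos measurableSet_Ioi (by simp) (hmul.sub hpdf) fun t ht => ?_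
    rw [← sub_mul]
    exact mul_pos (sub_pos.2 ht) (stdNormalPDF_pos t)
  rw [integral_sub hmul hpdf, integral_Ioi_mul_stdNormalPDF, integral_const_mul] at hgap
  linarith

theorem stdNormalPDF_div_lt_mul_integral_Ioi_stdNormalPDF {x : ℝ} (hx : 0 < x) :
    stdNormalPDF x / x < (1 + x⁻¹ ^ 2) * ∫ t in Ioi x, stdNormalPDF t := by
  have hpdf : IntegrableOn (fun t => (1 + x⁻¹ ^ 2) * stdNormalPDF t) (Ioi x) :=
    integrable_stdNormalPDF.integrableOn.const_mul _
  have hgap : 0 < ∫ t in Ioi x,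
      ((1 + x⁻¹ ^ 2) * stdNormalPDF t - (1 + t⁻¹ ^ 2) * stdNormalPDF t) := by
    refine setIntegral_pos_of_forall_pos measurableSet_Ioi (by simp)
      (hpdf.sub (integrableOn_one_add_inv_sq_mul_stdNormalPDF hx)) fun t ht => ?_
    have hinv : t⁻¹ ^ 2 < x⁻¹ ^ 2 :=
      pow_lt_pow_left₀ (inv_strictAnti₀ hx ht) (inv_nonneg.2 (hx.trans ht).le) two_ne_zero
    rw [← sub_mul]
    exact mul_pos (by linarith) (stdNormalPDF_pos t)
  rw [integral_sub hpdf (integrableOn_one_add_inv_sq_mul_stdNormalPDF hx),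
    integral_Ioi_one_add_inv_sq_mul_stdNormalPDF hx, integral_const_mul] at hgap
  linarith

/-- Gordon's inequality: for `x > 0`, `x < φ(x)/Φ(-x) < x + 1/x`. -/
theorem gordon_mills_ratio (x : ℝ) (hx : 0 < x) :
    x < stdNormalPDF x / stdNormalCDF (-x) ∧
      stdNormalPDF x / stdNormalCDF (-x) < x + 1 / x := by
  rw [stdNormalCDF_neg]
  have hI := integral_Ioi_stdNormalPDF_pos x
  constructor
  · rw [lt_div_iff₀ hI]
    exact mul_integral_Ioi_stdNormalPDF_lt x
  · rw [div_lt_iff₀ hI]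
    calc stdNormalPDF x = x * (stdNormalPDF x / x) := by field_simp
      _ < x * ((1 + x⁻¹ ^ 2) * ∫ t in Ioi x, stdNormalPDF t) := by
        gcongr
        exact stdNormalPDF_div_lt_mul_integral_Ioi_stdNormalPDF hx
      _ = (x + 1 / x) * ∫ t in Ioi x, stdNormalPDF t := by
        field_simp
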